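/- arXiv:1403.4489 — 2 statements merged into one kernel-verified Lean document; each statement's English description precedes it below -/
import Mathlib

section
/- If a and a' are distinct elements of the Bose-Chowla set A(q,θ), then a and a' are not congruent modulo q+1; equivalently, the elements of A(q,θ) can be labeled a_1,...,a_q with a_i ≡ i (mod q+1). -/
/-- The Bose-Chowla set: `a` with `θ^a - θ` in the subfield `F_q`
(characterized as fixed points of the `q`-power Frobenius). -/
def BoseChowla (q : ℕ) {F : Type*} [Field F] (θ : F) : Set (ZMod (q ^ 2 - 1)) :=
  {a | (θ ^ a.val - θ) ^ q = θ ^ a.val - θ}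

/-- The Cayley sum graph `G_{q,θ}`: `x ~ y` iff `x ≠ y` and `x + y ∈ A(q,θ)`. -/
def CayleyGraph (q : ℕ) {F : Type*} [Field F] (θ : F) : SimpleGraph (ZMod (q ^ 2 - 1)) :=
  SimpleGraph.fromRel (fun x y => x + y ∈ BoseChowla q θ)

/-- A graph is `C₄`-free: no four vertices form a 4-cycle. -/
def C4Free {V : Type*} (G : SimpleGraph V) : Prop :=
  ∀ a b c d : V, G.Adj a b → G.Adj b c → G.Adj c d → G.Adj d a → a = c ∨ b = d

/-!
If `a - b = j (q + 1)`, then `c = θ ^ (a - b)` satisfies `c ^ (q - 1) = 1`, so `c ∈ 𝔽_q` and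
`θ ^ a = c θ ^ b`. Subtracting `c (θ ^ b - θ) ∈ 𝔽_q` from `θ ^ a - θ ∈ 𝔽_q` leaves `(c - 1) θ ∈ 𝔽_q`.
As `c ≠ 1`, this puts `θ` in `𝔽_q`, the fixed field of `x ↦ x ^ q`, which is impossible for an
element of order `q ^ 2 - 1`.
-/

open Function

theorem RingHom.isFixedPt_of_isFixedPt_sub {R : Type*} [CommRing R] [NoZeroDivisors R]
    (φ : R →+* R) {x y c : R} (hc : IsFixedPt φ c) (hc1 : c ≠ 1) (hx : IsFixedPt φ (x - y))
    (hcx : IsFixedPt φ (x * c - y)) : IsFixedPt φ y := by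
  have h1 := hx.eq
  have h2 := hcx.eq
  rw [map_sub] at h1
  rw [map_sub, map_mul, hc.eq] at h2
  have key : (φ y - y) * (c - 1) = 0 := by linear_combination h2 - c * h1
  exact sub_eq_zero.mp ((mul_eq_zero.mp key).resolve_right (sub_ne_zero.mpr hc1))

theorem exists_ringHom_apply_eq_pow {F : Type*} [Field F] [Fintype F] {q n : ℕ}
    (hq : IsPrimePow q) (hF : Fintype.card F = q ^ n) : ∃ φ : F →+* F, ∀ x, φ x = x ^ q := by
  obtain ⟨p, k, hp, -, rfl⟩ := hq
  have := Fact.mk hp.nat_prime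
  have : CharP F p := charP_of_card_eq_prime_pow (f := k * n) (by rw [hF, pow_mul])
  exact ⟨iterateFrobenius F p k, iterateFrobenius_def p k⟩

section OrderOf

variable {M : Type*} [Monoid M] {θ : M} {n : ℕ} [NeZero n]

theorem pow_eq_pow_iff_natCast_eq (h : orderOf θ = n) {s t : ℕ} :
    θ ^ s = θ ^ t ↔ (s : ZMod n) = t := by
  have : IsOfFinOrder θ := orderOf_pos_iff.mp (h ▸ NeZero.pos n)
  rw [this.pow_eq_pow_iff_modEq, h, ZMod.natCast_eq_natCast_iff]

theorem pow_val_add (h : orderOf θ = n) (a b : ZMod n) :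
    θ ^ (a + b).val = θ ^ a.val * θ ^ b.val := by
  rw [← pow_add, pow_eq_pow_iff_natCast_eq h]
  simp

theorem pow_val_pow (h : orderOf θ = n) (a : ZMod n) (k : ℕ) :
    (θ ^ a.val) ^ k = θ ^ (a * k).val := by
  rw [← pow_mul, pow_eq_pow_iff_natCast_eq h]
  simp

theorem pow_val_eq_one_iff (h : orderOf θ = n) (a : ZMod n) : θ ^ a.val = 1 ↔ a = 0 := by
  rw [← pow_zero θ, pow_eq_pow_iff_natCast_eq h]
  simp

end OrderOf

theorem natCast_sq_eq_one_zmod {q : ℕ} (hq : q ≠ 0) : (q : ZMod (q ^ 2 - 1)) ^ 2 = 1 := by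
  have h := ZMod.natCast_self (q ^ 2 - 1)
  rw [Nat.cast_sub (Nat.one_le_pow _ _ (Nat.pos_of_ne_zero hq))] at h
  push_cast at h
  exact sub_eq_zero.mp h

theorem natCast_ne_one_zmod {q : ℕ} (hq : 2 ≤ q) : (q : ZMod (q ^ 2 - 1)) ≠ 1 := by
  have hlt : q < q ^ 2 - 1 := by
    have : 2 * q ≤ q ^ 2 := by nlinarith
    omega
  intro h
  have := (ZMod.natCast_eq_natCast_iff' q 1 _).mp (by rw [h, Nat.cast_one])
  rw [Nat.mod_eq_of_lt hlt, Nat.mod_eq_of_lt (by omega)] at this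
  omega

theorem bose_chowla_distinct_mod (q : ℕ) (hq : IsPrimePow q) (F : Type*) [Field F]
    [Fintype F] (hF : Fintype.card F = q ^ 2) (θ : F) (hθ : orderOf θ = q ^ 2 - 1) :
    ∀ a ∈ BoseChowla q θ, ∀ b ∈ BoseChowla q θ, a ≠ b →
      a - b ∉ AddSubgroup.zmultiples ((q : ZMod (q ^ 2 - 1)) + 1) := by
  intro a ha b hb hab hmem
  obtain ⟨j, hj⟩ := AddSubgroup.mem_zmultiples_iff.mp hmem
  have hq2 := hq.two_le
  have : NeZero (q ^ 2 - 1) := ⟨Nat.sub_ne_zero_of_lt (Nat.one_lt_pow two_ne_zero (by omega))⟩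
  obtain ⟨φ, hφ⟩ := exists_ringHom_apply_eq_pow hq hF
  set c := θ ^ (a - b).val
  have hθa : θ ^ a.val = θ ^ b.val * c := by rw [← pow_val_add hθ, add_sub_cancel]
  have hc1 : c ≠ 1 := by rwa [Ne, pow_val_eq_one_iff hθ, sub_eq_zero]
  have hdq : (a - b) * q = a - b := by
    rw [← hj, zsmul_eq_mul]
    linear_combination (j : ZMod (q ^ 2 - 1)) * natCast_sq_eq_one_zmod (by omega : q ≠ 0)
  have hc : IsFixedPt φ c := by rw [IsFixedPt, hφ, pow_val_pow hθ, hdq]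
  have hθφ : IsFixedPt φ θ := φ.isFixedPt_of_isFixedPt_sub hc hc1 ((hφ _).trans hb)
    (by rw [IsFixedPt, hφ, ← hθa]; exact ha)
  have hθq : θ ^ q = θ ^ 1 := by rw [pow_one, ← hφ]; exact hθφ
  rw [pow_eq_pow_iff_natCast_eq hθ, Nat.cast_one] at hθq
  exact natCast_ne_one_zmod hq2 hθq
end

section
/- For any odd prime power q, there exists a C₄-free graph on q² - 1 vertices with (q³ - 2q + 1)/2 edges; hence ex(q² - 1, C₄) ≥ (q³ - 2q + 1)/2. -/
/-!
Let `θ` generate `𝔽_{q²}ˣ` and let `A = {a | θ ^ a - θ ∈ 𝔽_q}`. Since `θ ∉ 𝔽_q`, the product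
`(θ + x) (θ + y)` with `x, y ∈ 𝔽_q` determines `x + y` and `x y`, hence `{x, y}`; so `A` is a Sidon
set, and a Sidon set makes its Cayley sum graph `C₄`-free. As `a ↦ θ ^ a - θ` is a bijection onto
`𝔽_{q²} \ {-θ}`, `|A| = q`. Every vertex `x` has degree `q`, less one when `2x ∈ A`; those `x`
correspond to the `y` with `y² - θ ∈ 𝔽_q`, and `y ↦ y ^ q - y` maps them bijectively onto the
`q - 1` nonzero `u` with `u ^ q = -u`. Hence `2 |E| = q (q² - 1) - (q - 1)`.
-/

open SimpleGraph

section SumGraph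

variable {G : Type*} [AddCommGroup G] {A : Set G}

theorem fromRel_add_mem_adj {x y : G} :
    (fromRel fun x y : G => x + y ∈ A).Adj x y ↔ x ≠ y ∧ x + y ∈ A := by
  rw [fromRel_adj, add_comm y x, or_self]

theorem c4Free_fromRel_add_mem
    (hA : ∀ a ∈ A, ∀ b ∈ A, ∀ c ∈ A, ∀ d ∈ A, a + b = c + d → a = c ∨ a = d) :
    C4Free (fromRel fun x y : G => x + y ∈ A) := by
  intro a b c d hab hbc hcd hda
  simp only [fromRel_add_mem_adj] at hab hbc hcd hda
  rcases hA _ hab.2 _ hcd.2 _ hbc.2 _ hda.2 (by abel) with h | h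
  · exact Or.inl (add_left_cancel ((add_comm b a).trans h))
  · exact Or.inr (add_left_cancel (h.trans (add_comm d a)))

theorem ncard_neighborSet_fromRel_add_mem_add_ite [DecidablePred (· ∈ A)] [Finite G] (x : G) :
    ((fromRel fun x y : G => x + y ∈ A).neighborSet x).ncard + (if x + x ∈ A then 1 else 0) =
      A.ncard := by
  have hnbr : (fromRel fun x y : G => x + y ∈ A).neighborSet x = (x + ·) ⁻¹' A \ {x} := by
    ext y
    simp only [mem_neighborSet, fromRel_add_mem_adj, Set.mem_sdiff, Set.mem_preimage,
      Set.mem_singleton_iff]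
    exact ⟨fun h => ⟨h.2, Ne.symm h.1⟩, fun h => ⟨Ne.symm h.2, h.1⟩⟩
  have htrans : ((x + ·) ⁻¹' A).ncard = A.ncard :=
    Set.ncard_preimage_of_injective_subset_range (add_right_injective x)
      fun a _ => ⟨a - x, add_sub_cancel x a⟩
  rw [hnbr, ← htrans]
  split_ifs with hx
  · exact Set.ncard_sdiff_singleton_add_one hx
  · rw [Set.sdiff_singleton_eq_self (show x ∉ (x + ·) ⁻¹' A from hx), add_zero]

theorem two_mul_ncard_edgeSet_fromRel_add_mem [Finite G] :
    2 * (fromRel fun x y : G => x + y ∈ A).edgeSet.ncard + {x | x + x ∈ A}.ncard =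
      Nat.card G * A.ncard := by
  classical
  have := Fintype.ofFinite G
  set Γ := fromRel fun x y : G => x + y ∈ A
  calc 2 * Γ.edgeSet.ncard + {x | x + x ∈ A}.ncard
      = ∑ x, ((Γ.neighborSet x).ncard + if x + x ∈ A then 1 else 0) := by
        rw [Finset.sum_add_distrib, Finset.sum_boole, ← coe_edgeFinset, Set.ncard_coe_finset,
          ← sum_degrees_eq_twice_card_edges, ← Set.ncard_coe_finset]
        simp [← coe_neighborFinset]
    _ = Nat.card G * A.ncard := by
        rw [Finset.sum_congr rfl fun x _ => ncard_neighborSet_fromRel_add_mem_add_ite x,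
          Finset.sum_const, Finset.card_univ, Nat.card_eq_fintype_card, smul_eq_mul]

end SumGraph

namespace IsPrimitiveRoot

section PowVal

variable {M : Type*} [CommMonoid M] {θ : M} {n : ℕ} [NeZero n]

theorem pow_val_add (hθ : IsPrimitiveRoot θ n) (a b : ZMod n) :
    θ ^ (a + b).val = θ ^ a.val * θ ^ b.val := by
  have h := pow_mod_orderOf θ (a.val + b.val)
  rw [← hθ.eq_orderOf] at h
  rw [ZMod.val_add, h, pow_add]

theorem injective_pow_val (hθ : IsPrimitiveRoot θ n) :
    Function.Injective fun a : ZMod n => θ ^ a.val :=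
  fun a b h => ZMod.val_injective n (hθ.pow_inj (ZMod.val_lt a) (ZMod.val_lt b) h)

end PowVal

variable {R : Type*} [CommRing R] [IsDomain R]

theorem ncard_setOf_pow_val_mem {θ : R} {n : ℕ} [NeZero n] (hθ : IsPrimitiveRoot θ n)
    {S : Set R} (hS : ∀ x ∈ S, x ^ n = 1) :
    {a : ZMod n | θ ^ a.val ∈ S}.ncard = S.ncard :=
  Set.ncard_preimage_of_injective_subset_range hθ.injective_pow_val fun x hx => by
    obtain ⟨i, hi, rfl⟩ := hθ.eq_pow_of_pow_eq_one (hS x hx)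
    exact ⟨i, show θ ^ (i : ZMod n).val = θ ^ i by rw [ZMod.val_natCast, Nat.mod_eq_of_lt hi]⟩

theorem ncard_setOf_pow_eq_self {ζ : R} {q : ℕ} (hζ : IsPrimitiveRoot ζ (q - 1)) (hq : 2 ≤ q) :
    {x : R | x ^ q = x}.ncard = q := by
  classical
  have hq1 : 0 < q - 1 := by omega
  have hroots :
      {x : R | x ^ q = x} = insert 0 (Polynomial.nthRootsFinset (q - 1) (1 : R) : Set R) := by
    ext x
    rw [Set.mem_insert_iff, Finset.mem_coe, Polynomial.mem_nthRootsFinset hq1,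
      Set.mem_ofPred_eq, ← Nat.sub_add_cancel (by omega : 1 ≤ q), pow_succ]
    rcases eq_or_ne x 0 with rfl | hx
    · simp
    · simp [mul_eq_right₀ hx, hx]
  rw [hroots, Set.ncard_insert_of_notMem
      (by simp [Polynomial.mem_nthRootsFinset hq1, zero_pow hq1.ne']),
    Set.ncard_coe_finset, hζ.card_nthRootsFinset]
  omega

end IsPrimitiveRoot

theorem Subfield.eq_or_eq_of_mul_eq_mul {F : Type*} [Field F] (K : Subfield F) {θ : F}
    (hθ : θ ∉ K) {a b c d : F} (ha : a ∈ K) (hb : b ∈ K) (hc : c ∈ K) (hd : d ∈ K)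
    (h : (θ + a) * (θ + b) = (θ + c) * (θ + d)) : a = c ∨ a = d := by
  have hlin : (a + b - (c + d)) * θ = c * d - a * b := by linear_combination h
  have hsum : a + b - (c + d) = 0 := by
    by_contra hne
    refine hθ ?_
    rw [eq_div_of_mul_eq hne ((mul_comm _ _).trans hlin)]
    exact K.div_mem (K.sub_mem (K.mul_mem hc hd) (K.mul_mem ha hb))
      (K.sub_mem (K.add_mem ha hb) (K.add_mem hc hd))
  have hprod : c * d - a * b = 0 := by rw [← hlin, hsum, zero_mul]
  have hfac : (a - c) * (a - d) = 0 := by linear_combination a * hsum + hprod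
  rcases mul_eq_zero.mp hfac with h | h
  · exact Or.inl (sub_eq_zero.mp h)
  · exact Or.inr (sub_eq_zero.mp h)

section Involution

variable {F : Type*} [Field F] (σ : F →+* F)

theorem ncard_setOf_map_eq_neg {δ : F} (hδ : σ δ = -δ) (hδ0 : δ ≠ 0) :
    {u | σ u = -u}.ncard = {x | σ x = x}.ncard := by
  have himage : (δ * ·) '' {x | σ x = x} = {u | σ u = -u} := by
    ext u
    constructor
    · rintro ⟨x, hx, rfl⟩
      simp only [Set.mem_ofPred_eq, map_mul, hδ, hx.out, neg_mul]
    · intro hu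
      refine ⟨u / δ, ?_, mul_div_cancel₀ u hδ0⟩
      simp only [Set.mem_ofPred_eq, map_div₀, hu.out, hδ, neg_div_neg_eq]
  rw [← himage, Set.ncard_image_of_injective _ (mul_right_injective₀ hδ0)]

theorem ncard_setOf_map_sq_sub_eq_self [Finite F] (hσ : ∀ x, σ (σ x) = x) (h2 : (2 : F) ≠ 0)
    {θ : F} (hθ : σ θ ≠ θ) :
    {y | σ (y ^ 2 - θ) = y ^ 2 - θ}.ncard = {x | σ x = x}.ncard - 1 := by
  set δ := σ θ - θ
  have hδ : σ δ = -δ := by simp only [δ, map_sub, hσ, neg_sub]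
  have hδ0 : δ ≠ 0 := sub_ne_zero.mpr hθ
  -- `y` is recovered from `σ y - y` because `(σ y - y) * (σ y + y) = δ`
  have hbij : Set.BijOn (fun y => σ y - y) {y | σ (y ^ 2 - θ) = y ^ 2 - θ}
      ({u | σ u = -u} \ {0}) := by
    have hT : ∀ y, σ (y ^ 2 - θ) = y ^ 2 - θ ↔ (σ y - y) * (σ y + y) = δ := fun y => by
      rw [map_sub, map_pow]
      constructor <;> intro h <;> linear_combination h
    have hg : ∀ u, σ u = -u → σ ((δ / u - u) / 2) = (δ / u + u) / 2 := fun u hu => by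
      rw [map_div₀, map_sub, map_div₀, hδ, hu, map_ofNat, neg_div_neg_eq, sub_neg_eq_add]
    refine Set.InvOn.bijOn (f' := fun u => (δ / u - u) / 2) ⟨fun y hy => ?_, fun u hu => ?_⟩
      (fun y hy => ?_) (fun u hu => ?_)
    · have hy' := (hT y).mp hy
      have hu0 : σ y - y ≠ 0 := left_ne_zero_of_mul (hy' ▸ hδ0)
      show (δ / (σ y - y) - (σ y - y)) / 2 = y
      rw [← hy', mul_div_cancel_left₀ _ hu0]
      field_simp
      ring
    · obtain ⟨hu, hu0 : u ≠ 0⟩ := hu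
      simp only [hg u hu]
      field_simp
      ring
    · have hy' := (hT y).mp hy
      refine ⟨?_, fun hu0 => hδ0 (by rw [← hy', hu0.out, zero_mul])⟩
      simp only [Set.mem_ofPred_eq, map_sub, hσ, neg_sub]
    · obtain ⟨hu, hu0 : u ≠ 0⟩ := hu
      rw [Set.mem_ofPred_eq, hT, hg u hu]
      field_simp
      ring
  rw [hbij.ncard_eq, Set.ncard_sdiff_singleton_of_mem (by simp), ncard_setOf_map_eq_neg σ hδ hδ0]

end Involution

theorem mem_boseChowla_iff {F : Type*} [Field F] {q : ℕ} {σ : F →+* F} (hσ : ∀ x, σ x = x ^ q)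
    {θ : F} {a : ZMod (q ^ 2 - 1)} : a ∈ BoseChowla q θ ↔ σ (θ ^ a.val - θ) = θ ^ a.val - θ := by
  rw [hσ]
  rfl

section BoseChowla

variable {F : Type*} [Field F] [Fintype F] {q : ℕ} (hF : Fintype.card F = q ^ 2)
  {σ : F →+* F} (hσ : ∀ x, σ x = x ^ q) {θ : F} (hθ : IsPrimitiveRoot θ (q ^ 2 - 1))

include hF

theorem one_lt_of_card_eq_sq : 1 < q :=
  (one_lt_pow_iff two_ne_zero).mp (hF ▸ Fintype.one_lt_card)

theorem lt_sq_sub_one_of_card_eq_sq : q < q ^ 2 - 1 := by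
  have hq := one_lt_of_card_eq_sq hF
  have : 2 * q ≤ q ^ 2 := by rw [sq]; exact Nat.mul_le_mul_right q hq
  omega

theorem neZero_sq_sub_one : NeZero (q ^ 2 - 1) :=
  ⟨by have := lt_sq_sub_one_of_card_eq_sq hF; omega⟩

theorem two_ne_zero_of_card_eq_sq (hq : Odd q) : (2 : F) ≠ 0 :=
  Ring.two_ne_zero fun h => by
    have := FiniteField.even_card_iff_char_two.mp h
    rw [hF, ← Nat.even_iff, Nat.even_pow] at this
    exact Nat.not_even_iff_odd.mpr hq this.1

include hθ in
theorem ncard_setOf_pow_val_mem_of_zero_notMem {S : Set F} (hS : 0 ∉ S) :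
    {a : ZMod (q ^ 2 - 1) | θ ^ a.val ∈ S}.ncard = S.ncard := by
  have := neZero_sq_sub_one hF
  exact hθ.ncard_setOf_pow_val_mem fun x hx =>
    hF ▸ FiniteField.pow_card_sub_one_eq_one x (ne_of_mem_of_not_mem hx hS)

include hσ

theorem map_map_eq_self_of_card_eq_sq (x : F) : σ (σ x) = x := by
  rw [hσ, hσ, ← pow_mul, ← sq, ← hF, FiniteField.pow_card]

include hθ

theorem map_ne_self_of_isPrimitiveRoot : σ θ ≠ θ := by
  have hq := one_lt_of_card_eq_sq hF
  have hq2 := lt_sq_sub_one_of_card_eq_sq hF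
  rw [hσ, ← Nat.sub_add_cancel hq.le, pow_succ, Ne, mul_eq_right₀ (hθ.ne_zero (by omega))]
  exact hθ.pow_ne_one_of_pos_of_lt (by omega) (by omega)

theorem ncard_setOf_map_eq_self : {x | σ x = x}.ncard = q := by
  have hq := one_lt_of_card_eq_sq hF
  have hζ : IsPrimitiveRoot (θ ^ (q + 1)) (q - 1) :=
    hθ.pow (by have := lt_sq_sub_one_of_card_eq_sq hF; omega) (by rw [← Nat.sq_sub_sq, one_pow])
  simp only [hσ]
  exact hζ.ncard_setOf_pow_eq_self hq

theorem boseChowla_sidon :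
    ∀ a ∈ BoseChowla q θ, ∀ b ∈ BoseChowla q θ, ∀ c ∈ BoseChowla q θ, ∀ d ∈ BoseChowla q θ,
      a + b = c + d → a = c ∨ a = d := by
  have := neZero_sq_sub_one hF
  intro a ha b hb c hc d hd habcd
  set K := σ.eqLocusField (RingHom.id F)
  have hθK : θ ∉ K := fun h =>
    map_ne_self_of_isPrimitiveRoot hF hσ hθ (RingHom.mem_eqLocusField.mp h)
  have hmem : ∀ {x}, x ∈ BoseChowla q θ → θ ^ x.val - θ ∈ K := (mem_boseChowla_iff hσ).mp
  have hprod : (θ + (θ ^ a.val - θ)) * (θ + (θ ^ b.val - θ)) =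
      (θ + (θ ^ c.val - θ)) * (θ + (θ ^ d.val - θ)) := by
    simp only [add_sub_cancel, ← hθ.pow_val_add, habcd]
  exact (K.eq_or_eq_of_mul_eq_mul hθK (hmem ha) (hmem hb) (hmem hc) (hmem hd) hprod).imp
    (fun h => hθ.injective_pow_val (sub_left_injective h))
    (fun h => hθ.injective_pow_val (sub_left_injective h))

theorem ncard_boseChowla : (BoseChowla q θ).ncard = q := by
  set S := {y : F | σ (y - θ) = y - θ}
  have hS : 0 ∉ S := fun h => map_ne_self_of_isPrimitiveRoot hF hσ hθ (by simpa [S] using h)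
  have hset : BoseChowla q θ = {a | θ ^ a.val ∈ S} := Set.ext fun a => mem_boseChowla_iff hσ
  calc (BoseChowla q θ).ncard = S.ncard := by
        rw [hset, ncard_setOf_pow_val_mem_of_zero_notMem hF hθ hS]
    _ = {x | σ x = x}.ncard := Set.ncard_preimage_of_injective_subset_range (s := {x | σ x = x})
        sub_left_injective fun x _ => ⟨x + θ, add_sub_cancel_right x θ⟩
    _ = q := ncard_setOf_map_eq_self hF hσ hθ

theorem ncard_setOf_add_self_mem_boseChowla (hq : Odd q) :
    {x | x + x ∈ BoseChowla q θ}.ncard = q - 1 := by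
  have := neZero_sq_sub_one hF
  have hθσ := map_ne_self_of_isPrimitiveRoot hF hσ hθ
  set T := {y : F | σ (y ^ 2 - θ) = y ^ 2 - θ}
  have hT : 0 ∉ T := fun h => hθσ (by simpa [T] using h)
  have hset : {x | x + x ∈ BoseChowla q θ} = {a | θ ^ a.val ∈ T} := Set.ext fun a => by
    rw [Set.mem_ofPred_eq, mem_boseChowla_iff hσ, hθ.pow_val_add, ← sq]
    rfl
  rw [hset, ncard_setOf_pow_val_mem_of_zero_notMem hF hθ hT,
    ncard_setOf_map_sq_sub_eq_self σ (map_map_eq_self_of_card_eq_sq hF hσ)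
      (two_ne_zero_of_card_eq_sq hF hq) hθσ,
    ncard_setOf_map_eq_self hF hσ hθ]

theorem c4Free_cayleyGraph : C4Free (CayleyGraph q θ) :=
  c4Free_fromRel_add_mem (boseChowla_sidon hF hσ hθ)

theorem two_mul_ncard_edgeSet_cayleyGraph (hq : Odd q) :
    2 * (CayleyGraph q θ).edgeSet.ncard = q ^ 3 - 2 * q + 1 := by
  have := neZero_sq_sub_one hF
  have h := two_mul_ncard_edgeSet_fromRel_add_mem (A := BoseChowla q θ)
  have hcube : (q ^ 2 - 1) * q = q ^ 3 - q := by rw [Nat.sub_mul, one_mul, ← pow_succ]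
  rw [ncard_setOf_add_self_mem_boseChowla hF hσ hθ hq, ncard_boseChowla hF hσ hθ, Nat.card_zmod,
    hcube] at h
  have hq1 := one_lt_of_card_eq_sq hF
  have h3 : 2 * q ≤ q ^ 3 := by
    rw [pow_succ, sq]
    exact Nat.mul_le_mul_right q (by nlinarith)
  unfold CayleyGraph
  omega

end BoseChowla

theorem turan_c4_lower_odd (q : ℕ) (hq : IsPrimePow q) (hodd : Odd q) :
    ∃ (V : Type) (_ : Fintype V) (G : SimpleGraph V),
      Fintype.card V = q ^ 2 - 1 ∧ C4Free G ∧
        2 * G.edgeSet.ncard = q ^ 3 - 2 * q + 1 := by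
  obtain ⟨p, k, hp, hk, rfl⟩ := hq
  have := Fact.mk (Nat.prime_iff.mpr hp)
  let F := GaloisField p (2 * k)
  let := Fintype.ofFinite F
  have hF : Fintype.card F = (p ^ k) ^ 2 := by
    rw [← Nat.card_eq_fintype_card, GaloisField.card p _ (by omega), ← pow_mul, mul_comm]
  obtain ⟨g, hg⟩ := IsCyclic.exists_ofOrder_eq_natCard (α := Fˣ)
  have hθ : IsPrimitiveRoot (g : F) ((p ^ k) ^ 2 - 1) := by
    rw [← hF, ← Nat.card_eq_fintype_card, ← Nat.card_units, ← hg, ← orderOf_units]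
    exact IsPrimitiveRoot.orderOf _
  have hσ : ∀ x : F, iterateFrobenius F p k x = x ^ p ^ k := iterateFrobenius_def p k
  have := neZero_sq_sub_one hF
  exact ⟨ZMod ((p ^ k) ^ 2 - 1), inferInstance, CayleyGraph (p ^ k) (g : F), ZMod.card _,
    c4Free_cayleyGraph hF hσ hθ, two_mul_ncard_edgeSet_cayleyGraph hF hσ hθ hodd⟩
end
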